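/- arXiv:2604.24677 — 2 statements merged into one kernel-verified Lean document; each statement's English description precedes it below -/
import Mathlib

section
/- With B(z) the unique power series solution of B = z(d-1)(1+B)^{d-1}, B(0)=0, and W = (1+B)^{d-1}, the number of rooted d-regular bipartite planar maps with a marked face and n black vertices satisfies M^{d,f}_n = d·[z^{n-1}] W(z), i.e. the generating series of such maps is z·d·W(z). -/
/-- An item of a blossoming tree: either a stem or a vertex (`node`) with its ordered
offspring list. Colors are implicit: the root is black and colors alternate
(`true` = black, `false` = white). -/
inductive Item : Type where
  | stem : Item
  | node : List Item → Item

namespace Item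

/-- Charge of an item (see the blossoming-tree bijection): `charge c t` where `c` is
the color of the root vertex of `t` if `t` is a node, and the color a child would
have (negation of the carrying vertex's color) if `t` is a stem; opening stems (at
black vertices) count `-1`, closing stems (at white vertices) count `+1`. -/
def charge : Bool → Item → ℤ
  | c, .stem => if c then 1 else -1
  | _, .node [] => 0
  | c, .node (it :: l) => charge (!c) it + charge c (.node l)

/-- Every non-root vertex in the item has degree `d`. -/
inductive RegularFrom (d : ℕ) : Item → Prop
  | stem : RegularFrom d .stem
  | node (l : List Item) : l.length = d - 1 → (∀ it ∈ l, RegularFrom d it) →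
      RegularFrom d (.node l)

/-- Charge conditions at every vertex: black vertices have charge `≤ 1`, white
vertices have charge `≥ 0`. -/
inductive WellCharged : Bool → Item → Prop
  | stem (c : Bool) : WellCharged c .stem
  | node (c : Bool) (l : List Item) :
      (c = true → charge true (.node l) ≤ 1) →
      (c = false → 0 ≤ charge false (.node l)) →
      (∀ it ∈ l, WellCharged (!c) it) → WellCharged c (.node l)

/-- Number of black vertices among the items of a list whose slots have color `c`. -/
def blackCountList : Bool → List Item → ℕ
  | _, [] => 0
  | c, (.stem :: l) => blackCountList c l
  | c, (.node l' :: l) =>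
      ((if c then 1 else 0) + blackCountList (!c) l') + blackCountList c l

end Item

open Item

/-!
Reduced modulo `d`, the charge of a `d`-regular item is `+1` or `-1` according to the colour of
the slot it hangs in. Together with the well-charged bounds this pins charges down exactly: a
white subtree has charge `d - 1`, and every offspring of a white vertex has charge `1`. A black
vertex with `m ≥ d - 1` offspring of total charge `d - m` therefore carries exactly one white
subtree, the other `m - 1` offspring being opening stems (charge `-1`). So a tree of charge `0`
is a white subtree placed in one of `d` positions, an offspring of a white vertex is a closing
stem or a white subtree placed in one of `d - 1` positions under a black vertex, and a white
subtree is a sequence of `d - 1` such offspring. Counting by black vertices, the series `A` of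
offspring of white vertices satisfies `A = 1 + (d - 1) z A ^ (d - 1)`, the equation of `1 + B`;
hence `A = 1 + B`, `W = A ^ (d - 1)` counts white subtrees, and `M^{d,f}_n = d [z^{n-1}] W`.
-/

namespace List

variable {α : Type*}

theorem exists_eq_replicate_append_cons_replicate [DecidableEq α] {a : α} :
    ∀ {l : List α}, l.countP (· ≠ a) = 1 →
      ∃ i w j, w ≠ a ∧ l = replicate i a ++ w :: replicate j a
  | [], h => by simp at h
  | x :: t, h => by
    rw [countP_cons] at h
    by_cases hx : x = a
    · obtain ⟨i, w, j, hw, rfl⟩ :=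
        exists_eq_replicate_append_cons_replicate (l := t) (by simpa [hx] using h)
      exact ⟨i + 1, w, j, hw, by simp [hx, replicate_succ]⟩
    · have h0 : t.countP (· ≠ a) = 0 := by rw [if_pos (decide_eq_true hx)] at h; omega
      have ht : ∀ y ∈ t, y = a := fun y hy => by simpa using countP_eq_zero.mp h0 y hy
      refine ⟨0, x, t.length, hx, ?_⟩
      rw [replicate_zero, nil_append, ← eq_replicate_iff.mpr ⟨rfl, ht⟩]

theorem replicate_append_cons_inj {a w w' : α} (hw : w ≠ a) (hw' : w' ≠ a) :
    ∀ {i i' : ℕ} {t t' : List α}, replicate i a ++ w :: t = replicate i' a ++ w' :: t' →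
      i = i' ∧ w = w' ∧ t = t'
  | 0, 0, _, _, h => by simpa using h
  | 0, _ + 1, _, _, h => absurd (cons_eq_cons.mp h).1 hw
  | _ + 1, 0, _, _, h => absurd (cons_eq_cons.mp h).1.symm hw'
  | _ + 1, _ + 1, _, _, h => by
    obtain ⟨rfl, rfl, rfl⟩ := replicate_append_cons_inj hw hw' (cons_eq_cons.mp h).2
    exact ⟨rfl, rfl, rfl⟩

theorem forall_mem_replicate_append_cons_replicate {p : α → Prop} {a w : α} {i j : ℕ}
    (ha : p a) (hw : p w) : ∀ x ∈ replicate i a ++ w :: replicate j a, p x := by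
  intro x hx
  simp only [mem_append, mem_cons, mem_replicate] at hx
  rcases hx with ⟨-, rfl⟩ | rfl | ⟨-, rfl⟩ <;> assumption

/-- Lists of length `m` whose entries all equal `a`, except for one entry, which lies in `S`. -/
def spikes (a : α) (S : Set α) (m : ℕ) : Set (List α) :=
  {l | ∃ i w j, i + 1 + j = m ∧ w ∈ S ∧ l = replicate i a ++ w :: replicate j a}

theorem spikes_eq_range (a : α) (S : Set α) (m : ℕ) :
    spikes a S m =
      Set.range fun p : Fin m × S => replicate p.1 a ++ p.2.1 :: replicate (m - 1 - p.1) a := by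
  ext l
  constructor
  · rintro ⟨i, w, j, rfl, hw, rfl⟩
    refine ⟨(⟨i, by omega⟩, ⟨w, hw⟩), ?_⟩
    simp only
    rw [show i + 1 + j - 1 - i = j by omega]
  · rintro ⟨⟨i, w, hw⟩, rfl⟩
    exact ⟨i, w, m - 1 - i, by omega, hw, rfl⟩

theorem card_spikes {a : α} {S : Set α} (ha : a ∉ S) (m : ℕ) :
    Nat.card (spikes a S m) = m * Nat.card S := by
  rw [spikes_eq_range, Nat.card_range_of_injective, Nat.card_prod, Nat.card_fin]
  rintro ⟨i, w, hw⟩ ⟨i', w', hw'⟩ h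
  obtain ⟨hi, rfl, -⟩ :=
    replicate_append_cons_inj (ne_of_mem_of_not_mem hw ha) (ne_of_mem_of_not_mem hw' ha) h
  simp only at hi
  rw [Fin.ext hi]

end List

namespace PowerSeries

theorem eq_of_eq_add_smul_X_mul_pow {R : Type*} [CommSemiring R] {H F G : R⟦X⟧} (c : R)
    (m : ℕ) (hF : F = H + c • (X * F ^ m)) (hG : G = H + c • (X * G ^ m)) : F = G := by
  ext k
  induction k using Nat.strong_induction_on with
  | _ k ih =>
  cases k with
  | zero => rw [hF, hG]; simp
  | succ k =>
    have htrunc : trunc (k + 1) F = trunc (k + 1) G := by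
      ext j
      simp only [coeff_trunc]
      split_ifs with hj
      exacts [ih j hj, rfl]
    have hpow : coeff k (F ^ m) = coeff k (G ^ m) := by
      rw [← coeff_coe_trunc_of_lt k.lt_succ_self, ← trunc_trunc_pow, htrunc, trunc_trunc_pow,
        coeff_coe_trunc_of_lt k.lt_succ_self]
    rw [hF, hG]
    simp [coeff_succ_X_mul, hpow]

end PowerSeries

namespace Item

open List

variable {d : ℕ}

@[simp]
theorem charge_stem (c : Bool) : charge c .stem = if c then 1 else -1 := by
  rw [charge]

@[simp]
theorem charge_node (c : Bool) (l : List Item) :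
    charge c (.node l) = (l.map (charge !c)).sum := by
  induction l with
  | nil => rw [charge]; rfl
  | cons it l ih => simp [charge, ih]

def blackCount (c : Bool) (it : Item) : ℕ := blackCountList c [it]

@[simp]
theorem blackCount_stem (c : Bool) : blackCount c .stem = 0 := by
  simp [blackCount, blackCountList]

@[simp]
theorem blackCount_node (c : Bool) (l : List Item) :
    blackCount c (.node l) = (if c then 1 else 0) + blackCountList (!c) l := by
  simp [blackCount, blackCountList]

theorem blackCountList_eq_sum (c : Bool) (l : List Item) :
    blackCountList c l = (l.map (blackCount c)).sum := by
  induction l with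
  | nil => simp [blackCountList]
  | cons it l ih => cases it <;> simp [blackCountList, ih]

theorem blackCountList_cons (c : Bool) (it : Item) (l : List Item) :
    blackCountList c (it :: l) = blackCount c it + blackCountList c l := by
  simp [blackCountList_eq_sum]

theorem regularFrom_node_iff {l : List Item} :
    RegularFrom d (.node l) ↔ l.length = d - 1 ∧ ∀ it ∈ l, RegularFrom d it := by
  constructor
  · intro h
    cases h with
    | node _ hlen hl => exact ⟨hlen, hl⟩
  · rintro ⟨hlen, hl⟩
    exact .node l hlen hl

theorem wellCharged_true_node_iff {l : List Item} :
    WellCharged true (.node l) ↔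
      charge true (.node l) ≤ 1 ∧ ∀ it ∈ l, WellCharged false it := by
  constructor
  · intro h
    cases h with
    | node _ _ h _ hl => exact ⟨h rfl, hl⟩
  · rintro ⟨h, hl⟩
    exact .node true l (fun _ => h) (by simp) hl

theorem wellCharged_false_node_iff {l : List Item} :
    WellCharged false (.node l) ↔
      0 ≤ charge false (.node l) ∧ ∀ it ∈ l, WellCharged true it := by
  constructor
  · intro h
    cases h with
    | node _ _ _ h hl => exact ⟨h rfl, hl⟩
  · rintro ⟨h, hl⟩
    exact .node false l (by simp) (fun _ => h) hl

theorem charge_le_one_of_wellCharged {it : Item} (h : WellCharged true it) :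
    charge true it ≤ 1 := by
  cases h with
  | stem => simp
  | node _ _ h _ _ => exact h rfl

theorem intCast_charge (hd : 0 < d) {it : Item} (h : RegularFrom d it) (c : Bool) :
    (charge c it : ZMod d) = if c then 1 else -1 := by
  induction h generalizing c with
  | stem => cases c <;> simp
  | node l hlen _ ih =>
    have hlen' : (l.length : ZMod d) = -1 := by
      rw [hlen, Nat.cast_sub hd, ZMod.natCast_self, Nat.cast_one, zero_sub]
    rw [charge_node, Int.cast_list_sum, map_map,
      sum_eq_card_nsmul _ (if !c then 1 else -1) (by simpa using fun it hit => ih it hit !c),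
      length_map, nsmul_eq_mul, hlen']
    cases c <;> simp

theorem charge_false_node (hd : 0 < d) {l : List Item} (hr : RegularFrom d (.node l))
    (hw : WellCharged false (.node l)) : charge false (.node l) = d - 1 := by
  obtain ⟨hlen, -⟩ := regularFrom_node_iff.mp hr
  obtain ⟨hnonneg, hl⟩ := wellCharged_false_node_iff.mp hw
  have hle : charge false (.node l) ≤ d - 1 :=
    calc charge false (.node l) = (l.map (charge true)).sum := charge_node _ _
      _ ≤ (l.map fun _ => (1 : ℤ)).sum :=
          sum_le_sum fun it hit => charge_le_one_of_wellCharged (hl it hit)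
      _ = d - 1 := by simp [hlen, Nat.cast_sub hd]
  have hdvd : (d : ℤ) ∣ charge false (.node l) + 1 := by
    rw [← ZMod.intCast_zmod_eq_zero_iff_dvd, Int.cast_add, intCast_charge hd hr]
    simp
  have := Int.le_of_dvd (by omega) hdvd
  omega

def IsWhiteTree (d : ℕ) (w : Item) : Prop :=
  RegularFrom d w ∧ WellCharged false w ∧ w ≠ .stem

/-- An offspring of a white vertex: a closing stem or a black subtree, in either case of
charge `1`. -/
def IsBlackItem (d : ℕ) (it : Item) : Prop :=
  RegularFrom d it ∧ WellCharged true it ∧ charge true it = 1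

theorem IsWhiteTree.charge_false (hd : 0 < d) {w : Item} (hw : IsWhiteTree d w) :
    charge false w = d - 1 := by
  obtain ⟨hr, hwc, hs⟩ := hw
  cases w with
  | stem => exact absurd rfl hs
  | node l => exact charge_false_node hd hr hwc

open Classical in
theorem sum_charge_false (hd : 0 < d) {l : List Item}
    (h : ∀ it ∈ l, RegularFrom d it ∧ WellCharged false it) :
    (l.map (charge false)).sum = d * l.countP (· ≠ .stem) - l.length := by
  induction l with
  | nil => simp
  | cons it l ih =>
    obtain ⟨⟨hr, hw⟩, hl⟩ := forall_mem_cons.mp h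
    rw [map_cons, sum_cons, ih hl, countP_cons, length_cons]
    by_cases hs : it = .stem
    · subst hs
      simp only [charge_stem, ne_eq, not_true_eq_false, decide_false, Bool.false_eq_true,
        ↓reduceIte]
      push_cast
      ring
    · rw [IsWhiteTree.charge_false hd ⟨hr, hw, hs⟩]
      simp only [ne_eq, hs, not_false_eq_true, decide_true, ↓reduceIte]
      push_cast
      ring

theorem blackCountList_spike (c : Bool) (i j : ℕ) (w : Item) :
    blackCountList c (replicate i Item.stem ++ w :: replicate j Item.stem) = blackCount c w := by
  simp [blackCountList_eq_sum, map_replicate]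

theorem charge_spike (c : Bool) (i j : ℕ) (w : Item) :
    ((replicate i Item.stem ++ w :: replicate j Item.stem).map (charge c)).sum =
      charge c w + (i + j) * charge c .stem := by
  simp only [map_append, map_replicate, map_cons, sum_append, sum_replicate, sum_cons,
    nsmul_eq_mul]
  ring

theorem blackNode_iff_mem_spikes (hd : 0 < d) {m : ℕ} (hm : d ≤ m + 1) {l : List Item} :
    (l.length = m ∧ (∀ it ∈ l, RegularFrom d it) ∧ WellCharged true (.node l) ∧
      charge true (.node l) = d - m) ↔ l ∈ spikes .stem {w | IsWhiteTree d w} m := by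
  classical
  constructor
  · rintro ⟨hlen, hr, hw, hc⟩
    have hchildren : ∀ it ∈ l, RegularFrom d it ∧ WellCharged false it :=
      fun it hit => ⟨hr it hit, (wellCharged_true_node_iff.mp hw).2 it hit⟩
    have hcount : l.countP (· ≠ .stem) = 1 := by
      rw [charge_node, Bool.not_true, sum_charge_false hd hchildren, hlen] at hc
      have hdc : (d : ℤ) * (l.countP (· ≠ .stem) : ℕ) = d := by linarith
      exact_mod_cast (mul_eq_left₀ (by omega : (d : ℤ) ≠ 0)).mp hdc
    obtain ⟨i, w, j, hws, rfl⟩ := exists_eq_replicate_append_cons_replicate hcount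
    have hwl : w ∈ replicate i Item.stem ++ w :: replicate j Item.stem := by simp
    refine ⟨i, w, j, ?_, ⟨hr w hwl, (hchildren w hwl).2, hws⟩, rfl⟩
    simp only [length_append, length_replicate, length_cons] at hlen
    omega
  · rintro ⟨i, w, j, rfl, hw, rfl⟩
    have hc : charge true (.node (replicate i Item.stem ++ w :: replicate j Item.stem)) =
        d - (i + 1 + j : ℕ) := by
      rw [charge_node, Bool.not_true, charge_spike, hw.charge_false hd, charge_stem,
        if_neg Bool.false_ne_true]
      push_cast
      ring
    have hlen : (replicate i Item.stem ++ w :: replicate j Item.stem).length = i + 1 + j := by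
      simp only [length_append, length_replicate, length_cons]
      omega
    refine ⟨hlen, forall_mem_replicate_append_cons_replicate .stem hw.1, ?_, hc⟩
    exact wellCharged_true_node_iff.mpr
      ⟨by rw [hc]; omega, forall_mem_replicate_append_cons_replicate (.stem _) hw.2.1⟩

theorem isWhiteTree_node_iff (hd : 0 < d) {l : List Item} :
    IsWhiteTree d (.node l) ↔ l.length = d - 1 ∧ ∀ it ∈ l, IsBlackItem d it := by
  constructor
  · rintro ⟨hr, hw, -⟩
    obtain ⟨hlen, hrl⟩ := regularFrom_node_iff.mp hr
    obtain ⟨-, hwl⟩ := wellCharged_false_node_iff.mp hw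
    have hsum : (l.map (charge true)).sum = (l.map fun _ => (1 : ℤ)).sum := by
      have := charge_false_node hd hr hw
      simp only [charge_node, Bool.not_false] at this
      simp [this, hlen, Nat.cast_sub hd]
    refine ⟨hlen, fun it hit => ⟨hrl it hit, hwl it hit, ?_⟩⟩
    by_contra hne
    have hlt := sum_lt_sum _ _ (fun x hx => charge_le_one_of_wellCharged (hwl x hx))
      ⟨it, hit, lt_of_le_of_ne (charge_le_one_of_wellCharged (hwl it hit)) hne⟩
    exact hlt.ne hsum
  · rintro ⟨hlen, hl⟩
    have hc : charge false (.node l) = d - 1 := by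
      rw [charge_node, Bool.not_false, map_congr_left fun it hit => (hl it hit).2.2]
      simp [hlen, Nat.cast_sub hd]
    refine ⟨regularFrom_node_iff.mpr ⟨hlen, fun it hit => (hl it hit).1⟩,
      wellCharged_false_node_iff.mpr ⟨by omega, fun it hit => (hl it hit).2.1⟩, nofun⟩

def blackItems (d k : ℕ) : Set Item := {it | IsBlackItem d it ∧ blackCount true it = k}

def whiteTrees (d k : ℕ) : Set Item := {w | IsWhiteTree d w ∧ blackCount false w = k}

def blackForests (d m k : ℕ) : Set (List Item) :=
  {l | l.length = m ∧ (∀ it ∈ l, IsBlackItem d it) ∧ blackCountList true l = k}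

/-- The trees counted by `M^{d,f}_n`, encoded by the offspring list of the root. -/
def rootedTrees (d n : ℕ) : Set (List Item) :=
  {l | l.length = d ∧ (∀ it ∈ l, RegularFrom d it) ∧ WellCharged true (.node l) ∧
    charge true (.node l) = 0 ∧ 1 + blackCountList false l = n}

theorem node_injective : Function.Injective Item.node := fun _ _ h => Item.node.inj h

theorem stem_notMem_whiteTrees (k : ℕ) : Item.stem ∉ whiteTrees d k := fun h => h.1.2.2 rfl

theorem mem_spikes_whiteTrees_iff {m k : ℕ} {l : List Item} :
    l ∈ spikes .stem (whiteTrees d k) m ↔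
      l ∈ spikes .stem {w | IsWhiteTree d w} m ∧ blackCountList false l = k := by
  constructor
  · rintro ⟨i, w, j, hm, ⟨hw, rfl⟩, rfl⟩
    exact ⟨⟨i, w, j, hm, hw, rfl⟩, blackCountList_spike _ _ _ _⟩
  · rintro ⟨⟨i, w, j, hm, hw, rfl⟩, rfl⟩
    exact ⟨i, w, j, hm, ⟨hw, (blackCountList_spike _ _ _ _).symm⟩, rfl⟩

theorem blackItems_zero : blackItems d 0 = {.stem} := by
  ext it
  cases it with
  | stem => simp [blackItems, IsBlackItem, RegularFrom.stem, WellCharged.stem]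
  | node l => simp [blackItems]

theorem blackItems_succ (hd : 0 < d) (k : ℕ) :
    blackItems d (k + 1) = .node '' spikes .stem (whiteTrees d k) (d - 1) := by
  ext it
  cases it with
  | stem => simp [blackItems]
  | node l =>
    rw [node_injective.mem_set_image, mem_spikes_whiteTrees_iff,
      ← blackNode_iff_mem_spikes hd (m := d - 1) (by omega)]
    simp only [blackItems, IsBlackItem, Set.mem_ofPred_eq, regularFrom_node_iff,
      blackCount_node, if_true, Bool.not_true, Nat.cast_sub hd, Nat.cast_one, sub_sub_cancel]
    constructor
    · rintro ⟨⟨⟨hlen, hr⟩, hw, hc⟩, hk⟩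
      exact ⟨⟨hlen, hr, hw, hc⟩, by omega⟩
    · rintro ⟨⟨hlen, hr, hw, hc⟩, hk⟩
      exact ⟨⟨⟨hlen, hr⟩, hw, hc⟩, by omega⟩

theorem whiteTrees_eq_image (hd : 0 < d) (k : ℕ) :
    whiteTrees d k = .node '' blackForests d (d - 1) k := by
  ext w
  cases w with
  | stem => simp [whiteTrees, IsWhiteTree]
  | node l =>
    rw [node_injective.mem_set_image]
    simp only [whiteTrees, blackForests, Set.mem_ofPred_eq, isWhiteTree_node_iff hd,
      blackCount_node, Bool.false_eq_true, if_false, zero_add, Bool.not_false, and_assoc]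

theorem rootedTrees_eq (hd : 0 < d) {n : ℕ} (hn : 1 ≤ n) :
    rootedTrees d n = spikes .stem (whiteTrees d (n - 1)) d := by
  ext l
  rw [mem_spikes_whiteTrees_iff, ← blackNode_iff_mem_spikes hd (m := d) (by omega),
    sub_self]
  simp only [rootedTrees, Set.mem_ofPred_eq]
  constructor
  · rintro ⟨hlen, hr, hw, hc, hk⟩
    exact ⟨⟨hlen, hr, hw, hc⟩, by omega⟩
  · rintro ⟨⟨hlen, hr, hw, hc⟩, hk⟩
    exact ⟨hlen, hr, hw, hc, by omega⟩

theorem card_blackItems_succ (hd : 0 < d) (k : ℕ) :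
    Nat.card (blackItems d (k + 1)) = (d - 1) * Nat.card (whiteTrees d k) := by
  rw [blackItems_succ hd, Nat.card_image_of_injective node_injective,
    card_spikes (stem_notMem_whiteTrees k)]

theorem card_whiteTrees (hd : 0 < d) (k : ℕ) :
    Nat.card (whiteTrees d k) = Nat.card (blackForests d (d - 1) k) := by
  rw [whiteTrees_eq_image hd, Nat.card_image_of_injective node_injective]

theorem card_rootedTrees (hd : 0 < d) {n : ℕ} (hn : 1 ≤ n) :
    Nat.card (rootedTrees d n) = d * Nat.card (whiteTrees d (n - 1)) := by
  rw [rootedTrees_eq hd hn, card_spikes (stem_notMem_whiteTrees _)]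

theorem card_blackForests_zero (k : ℕ) :
    Nat.card (blackForests d 0 k) = if k = 0 then 1 else 0 := by
  have hforests : blackForests d 0 k = {l | l = [] ∧ k = 0} := by
    ext l
    simp only [blackForests, Set.mem_ofPred_eq, length_eq_zero_iff]
    constructor
    · rintro ⟨rfl, -, rfl⟩
      exact ⟨rfl, by simp [blackCountList]⟩
    · rintro ⟨rfl, rfl⟩
      simp [blackCountList]
  rw [hforests]
  split_ifs with hk <;> simp [hk]

theorem cons_mem_blackForests {it : Item} {l : List Item} {i j k m : ℕ}
    (hit : it ∈ blackItems d i) (hl : l ∈ blackForests d m j) (hk : i + j = k) :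
    it :: l ∈ blackForests d (m + 1) k := by
  obtain ⟨hb, rfl⟩ := hit
  obtain ⟨rfl, hbl, rfl⟩ := hl
  refine ⟨rfl, forall_mem_cons.mpr ⟨hb, hbl⟩, ?_⟩
  rw [← hk, blackCountList_cons]

open Finset.HasAntidiagonal in
theorem blackForests_cons_bijective (m k : ℕ) :
    Function.Bijective
      fun q : (Σ p : antidiagonal k, blackItems d p.1.1 × blackForests d m p.1.2) =>
        (⟨q.2.1 :: q.2.2, cons_mem_blackForests q.2.1.2 q.2.2.2 (mem_antidiagonal.mp q.1.2)⟩ :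
          blackForests d (m + 1) k) := by
  constructor
  · rintro ⟨⟨⟨i, j⟩, hp⟩, ⟨it, hit⟩, ⟨l, hl⟩⟩
      ⟨⟨⟨i', j'⟩, hp'⟩, ⟨it', hit'⟩, ⟨l', hl'⟩⟩ h
    obtain ⟨rfl, rfl⟩ := cons_eq_cons.mp (Subtype.ext_iff.mp h)
    obtain rfl : i = i' := hit.2.symm.trans hit'.2
    obtain rfl : j = j' := hl.2.2.symm.trans hl'.2.2
    rfl
  · rintro ⟨_ | ⟨it, l⟩, hlen, hb, rfl⟩
    · simp at hlen
    · obtain ⟨hit, hl⟩ := forall_mem_cons.mp hb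
      refine ⟨⟨⟨(blackCount true it, blackCountList true l), ?_⟩, ⟨it, hit, rfl⟩,
        ⟨l, by simpa using hlen, hl, rfl⟩⟩, rfl⟩
      rw [mem_antidiagonal, ← blackCountList_cons]

open Finset.HasAntidiagonal in
theorem finite_blackForests {k : ℕ} (hfin : ∀ i ≤ k, (blackItems d i).Finite) (m : ℕ) :
    (blackForests d m k).Finite := by
  induction m generalizing k with
  | zero =>
    exact (Set.finite_singleton []).subset fun l hl => length_eq_zero_iff.mp hl.1
  | succ m ih =>
    have : ∀ p : antidiagonal k, Finite (blackItems d p.1.1) :=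
      fun p => (hfin _ (antidiagonal.fst_le p.2)).to_subtype
    have : ∀ p : antidiagonal k, Finite (blackForests d m p.1.2) :=
      fun p => (ih fun i hi => hfin i <| hi.trans (antidiagonal.snd_le p.2)).to_subtype
    exact Set.finite_coe_iff.mp (Finite.of_surjective _ (blackForests_cons_bijective m k).2)

theorem finite_blackItems (hd : 0 < d) (k : ℕ) : (blackItems d k).Finite := by
  induction k using Nat.strong_induction_on with
  | _ k ih =>
  cases k with
  | zero => simp [blackItems_zero]
  | succ k =>
    have : Finite (whiteTrees d k) := by
      rw [whiteTrees_eq_image hd]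
      exact ((finite_blackForests (fun i hi => ih i (by omega)) _).image _).to_subtype
    rw [blackItems_succ hd, spikes_eq_range]
    exact (Set.finite_range _).image _

open Finset.HasAntidiagonal in
theorem card_blackForests_succ (hd : 0 < d) (m k : ℕ) :
    Nat.card (blackForests d (m + 1) k) =
      ∑ p ∈ antidiagonal k, Nat.card (blackItems d p.1) * Nat.card (blackForests d m p.2) := by
  have : ∀ i, Finite (blackItems d i) := fun i => (finite_blackItems hd i).to_subtype
  have : ∀ j, Finite (blackForests d m j) :=
    fun j => (finite_blackForests (fun i _ => finite_blackItems hd i) m).to_subtype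
  rw [← Nat.card_eq_of_bijective _ (blackForests_cons_bijective m k), Nat.card_sigma,
    ← Finset.sum_coe_sort (antidiagonal k)]
  simp only [Nat.card_prod]

end Item

open PowerSeries

noncomputable def blackItemSeries (d : ℕ) : ℚ⟦X⟧ :=
  mk fun k => (Nat.card (blackItems d k) : ℚ)

theorem coeff_blackItemSeries (d k : ℕ) :
    coeff k (blackItemSeries d) = Nat.card (blackItems d k) :=
  coeff_mk _ _

theorem coeff_blackItemSeries_pow {d : ℕ} (hd : 0 < d) (m k : ℕ) :
    coeff k (blackItemSeries d ^ m) = Nat.card (blackForests d m k) := by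
  induction m generalizing k with
  | zero =>
    rw [pow_zero, coeff_one, card_blackForests_zero]
    split_ifs <;> simp
  | succ m ih =>
    rw [pow_succ', coeff_mul, card_blackForests_succ hd, Nat.cast_sum]
    refine Finset.sum_congr rfl fun p _ => ?_
    rw [coeff_blackItemSeries, ih, Nat.cast_mul]

theorem blackItemSeries_eq {d : ℕ} (hd : 0 < d) :
    blackItemSeries d = 1 + ((d : ℚ) - 1) • (X * blackItemSeries d ^ (d - 1)) := by
  ext k
  cases k with
  | zero => simp [coeff_blackItemSeries, blackItems_zero]
  | succ k =>
    rw [map_add, coeff_one, if_neg k.succ_ne_zero, zero_add, coeff_smul, coeff_succ_X_mul,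
      coeff_blackItemSeries_pow hd, coeff_blackItemSeries, card_blackItems_succ hd,
      card_whiteTrees hd, Nat.cast_mul, Nat.cast_sub hd, Nat.cast_one, smul_eq_mul]

theorem marked_maps_generating_series_general (d : ℕ) (hd : 3 ≤ d)
    (B : PowerSeries ℚ)
    (hBeq : B = ((d : ℚ) - 1) • (PowerSeries.X * (1 + B) ^ (d - 1)))
    (Mf : ℕ → ℕ)
    (hbij : ∀ n : ℕ, 1 ≤ n →
      Mf n = Nat.card {l : List Item //
        l.length = d ∧ (∀ it ∈ l, RegularFrom d it) ∧
        WellCharged true (.node l) ∧ charge true (.node l) = 0 ∧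
        1 + blackCountList false l = n}) :
    ∀ n : ℕ, 1 ≤ n →
      (Mf n : ℚ) = (d : ℚ) * PowerSeries.coeff (n - 1) ((1 + B) ^ (d - 1)) := by
  intro n hn
  have hd₀ : 0 < d := by omega
  have hseries : blackItemSeries d = 1 + B :=
    eq_of_eq_add_smul_X_mul_pow _ _ (blackItemSeries_eq hd₀) (by conv_lhs => rw [hBeq])
  have hcount : Mf n = d * Nat.card (whiteTrees d (n - 1)) :=
    (hbij n hn).trans (card_rootedTrees hd₀ hn)
  rw [hcount, ← hseries, coeff_blackItemSeries_pow hd₀, card_whiteTrees hd₀, Nat.cast_mul]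

/-- Generating-series form of the count of `d`-regular bipartite plane maps: with `B`
the power series solution of `B = z(d-1)(1+B)^{d-1}`, `B(0)=0`, and
`W = (1+B)^{d-1}`, and assuming (the blossoming-tree bijection) that `M^{d,f}_n`, the
number of black-rooted `d`-regular bipartite planar maps with a marked face and `n`
black vertices, equals the number of black-rooted well-charged `d`-regular blossoming
trees of charge `0` with `n` black vertices (a tree being encoded by the ordered
offspring list of its root), one has `M^{d,f}_n = d · [z^{n-1}] W(z)`, i.e. the
generating series of such maps is `z·d·W(z)`. -/
theorem marked_maps_generating_series (d : ℕ) (hd : 3 ≤ d)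
    (B : PowerSeries ℚ) (hB0 : PowerSeries.constantCoeff B = 0)
    (hBeq : B = ((d : ℚ) - 1) • (PowerSeries.X * (1 + B) ^ (d - 1)))
    (Mf : ℕ → ℕ)
    (hbij : ∀ n : ℕ, 1 ≤ n →
      Mf n = Nat.card {l : List Item //
        l.length = d ∧ (∀ it ∈ l, RegularFrom d it) ∧
        WellCharged true (.node l) ∧ charge true (.node l) = 0 ∧
        1 + blackCountList false l = n}) :
    ∀ n : ℕ, 1 ≤ n →
      (Mf n : ℚ) = (d : ℚ) * PowerSeries.coeff (n - 1) ((1 + B) ^ (d - 1)) :=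
  marked_maps_generating_series_general d hd B hBeq Mf hbij
end

section
/- In any rooted well-charged d-regular blossoming tree of total charge 0: every non-root black vertex has charge 1, the root (black) vertex has charge 0, and every white vertex has charge d-1. Moreover, the offspring of every white vertex consists of d-1 elements each of which is a closing stem or a black child; the offspring of every non-root black vertex consists of exactly one white child and d-2 opening stems; and the root has one white child and d-1 opening stems. -/
namespace Item

/-- `isStem` test. -/
def isStem : Item → Bool
  | .stem => true
  | .node _ => false

/-- `isNode` test. -/
def isNode : Item → Bool
  | .stem => false
  | .node _ => true

/-- `Occ c t c' s`: the item `s` occurs in `t` at a vertex of color `c'`, where `c`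
is the color of the root vertex of `t`. -/
inductive Occ : Bool → Item → Bool → Item → Prop
  | refl (c : Bool) (t : Item) : Occ c t c t
  | child (c : Bool) (l : List Item) (c' : Bool) (s it : Item) :
      it ∈ l → Occ (!c) it c' s → Occ c (.node l) c' s

end Item

open Item

section Aux

lemma charge_node_eq_sum (c : Bool) (ls : List Item) :
    charge c (.node ls) = (ls.map (charge (!c))).sum := by
  induction ls with
  | nil => simp [charge]
  | cons a l ih => simp [charge, ih]

lemma sum_map_le_length (f : Item → ℤ) (l : List Item) (h : ∀ x ∈ l, f x ≤ 1) :
    (l.map f).sum ≤ l.length := by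
  induction l with
  | nil => simp
  | cons a l ih =>
    simp only [List.map_cons, List.sum_cons, List.length_cons]
    have h1 := h a (by simp)
    have h2 := ih (fun x hx => h x (by simp [hx]))
    push_cast
    omega

lemma sum_map_eq_forces (f : Item → ℤ) (l : List Item) (h : ∀ x ∈ l, f x ≤ 1)
    (hs : (l.map f).sum = l.length) : ∀ x ∈ l, f x = 1 := by
  induction l with
  | nil => simp
  | cons a l ih =>
    simp only [List.map_cons, List.sum_cons, List.length_cons] at hs
    have h1 := h a (by simp)
    have h2 := sum_map_le_length f l (fun x hx => h x (by simp [hx]))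
    have ha : f a = 1 := by push_cast at hs; omega
    have hrest : (l.map f).sum = l.length := by push_cast at hs ⊢; omega
    intro x hx
    rcases List.mem_cons.1 hx with rfl | hx
    · exact ha
    · exact ih (fun y hy => h y (by simp [hy])) hrest x hx

lemma dvd_sum_map (d : ℕ) (f : Item → ℤ) (a : ℤ) (l : List Item)
    (h : ∀ x ∈ l, (d : ℤ) ∣ f x - a) :
    (d : ℤ) ∣ (l.map f).sum - l.length * a := by
  induction l with
  | nil => simp
  | cons x l ih =>
    have h1 := h x (by simp)
    have h2 := ih (fun y hy => h y (by simp [hy]))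
    simp only [List.map_cons, List.sum_cons, List.length_cons]
    have : f x + (l.map f).sum - (↑l.length + 1) * a
        = (f x - a) + ((l.map f).sum - l.length * a) := by ring
    push_cast
    rw [this]
    exact dvd_add h1 h2

lemma charge_mod (d : ℕ) (hd : 3 ≤ d) {t : Item} (ht : RegularFrom d t) :
    ∀ c : Bool, (d : ℤ) ∣ charge c t - (if c then 1 else -1) := by
  induction ht with
  | stem => intro c; simp [charge]
  | node l hlen hreg ih =>
    intro c
    rw [charge_node_eq_sum]
    have h1 : (d : ℤ) ∣ (l.map (charge (!c))).sum - l.length * (if !c then 1 else -1) :=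
      dvd_sum_map d _ _ l (fun x hx => ih x hx (!c))
    have hlen' : (l.length : ℤ) = (d : ℤ) - 1 := by
      rw [hlen]; push_cast [Nat.cast_sub (by omega : 1 ≤ d)]; ring
    rw [hlen'] at h1
    cases c with
    | true =>
      simp only [Bool.not_true, if_false, if_true] at h1 ⊢
      have he : (l.map (charge false)).sum - 1
          = ((l.map (charge false)).sum - ((d : ℤ) - 1) * (-1)) + (-1) * d := by ring
      rw [he]; exact dvd_add h1 ⟨-1, by ring⟩
    | false =>
      simp only [Bool.not_false, if_true] at h1
      show (d : ℤ) ∣ (l.map (charge true)).sum - (-1)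
      have he : (l.map (charge true)).sum - (-1)
          = ((l.map (charge true)).sum - ((d : ℤ) - 1) * 1) + 1 * d := by ring
      rw [he]; exact dvd_add h1 ⟨1, by ring⟩

/-- Every item in a white node's offspring has black charge at most 1. -/
lemma child_charge_le_one {ls : List Item} (hwc : ∀ it ∈ ls, WellCharged true it) :
    ∀ it ∈ ls, charge true it ≤ 1 := by
  intro it hit
  cases it with
  | stem => simp [charge]
  | node m =>
    cases hwc _ hit with
    | node _ _ h1 _ _ => exact h1 rfl

/-- White node lemma: charge is d-1 and every black node child has charge 1. -/
lemma white_lemma (d : ℕ) (hd : 3 ≤ d) (ls : List Item)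
    (hreg : RegularFrom d (.node ls)) (hwc : WellCharged false (.node ls)) :
    charge false (.node ls) = (d : ℤ) - 1 ∧ ∀ it ∈ ls, charge true it = 1 := by
  obtain ⟨hlen, hregs⟩ : ls.length = d - 1 ∧ ∀ it ∈ ls, RegularFrom d it := by
    cases hreg with | node _ h1 h2 => exact ⟨h1, h2⟩
  obtain ⟨h0, hwcs⟩ : 0 ≤ charge false (.node ls) ∧ ∀ it ∈ ls, WellCharged true it := by
    cases hwc with | node _ _ _ h2 h3 => exact ⟨h2 rfl, fun it hit => h3 it hit⟩
  have hle1 := child_charge_le_one hwcs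
  have hlen' : (ls.length : ℤ) = (d : ℤ) - 1 := by
    rw [hlen]; push_cast [Nat.cast_sub (by omega : 1 ≤ d)]; ring
  have hub : charge false (.node ls) ≤ (d : ℤ) - 1 := by
    rw [charge_node_eq_sum]
    simpa [hlen'] using sum_map_le_length (charge true) ls hle1
  have hdvd := charge_mod d hd hreg false
  have hlb : (d : ℤ) ≤ charge false (.node ls) + 1 :=
    Int.le_of_dvd (by omega) (by simpa [sub_neg_eq_add] using hdvd)
  have hch : charge false (.node ls) = (d : ℤ) - 1 := by omega
  refine ⟨hch, ?_⟩
  have hsum : (ls.map (charge true)).sum = ls.length := by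
    rw [charge_node_eq_sum] at hch
    simp only [Bool.not_false] at hch
    rw [hch, hlen']
  exact sum_map_eq_forces (charge true) ls hle1 hsum

/-- Propagation of regularity and well-chargedness along occurrences. -/
lemma occ_prop {d : ℕ} {c : Bool} {t : Item} {c' : Bool} {s : Item}
    (hocc : Occ c t c' s) (hreg : RegularFrom d t) (hwc : WellCharged c t) :
    RegularFrom d s ∧ WellCharged c' s := by
  induction hocc with
  | refl => exact ⟨hreg, hwc⟩
  | child c l c' s it hmem hocc ih =>
    have hr : RegularFrom d it := by cases hreg with | node _ _ h => exact h it hmem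
    have hw : WellCharged (!c) it := by cases hwc with | node _ _ _ _ h => exact h it hmem
    exact ih hr hw

/-- Any black node occurring strictly inside is a child of a white node, hence charge 1. -/
lemma occ_black {d : ℕ} (hd : 3 ≤ d) {c : Bool} {t : Item} {c' : Bool} {s : Item}
    (hocc : Occ c t c' s) (hreg : RegularFrom d t) (hwc : WellCharged c t) :
    (s = t ∧ c' = c) ∨ (∀ ls : List Item, s = .node ls → c' = true → charge true (.node ls) = 1) := by
  induction hocc with
  | refl => exact Or.inl ⟨rfl, rfl⟩
  | child c l c' s it hmem hocc ih =>
    right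
    intro ls hs hc'
    subst hs; subst hc'
    have hr : RegularFrom d it := by cases hreg with | node _ _ h => exact h it hmem
    have hw : WellCharged (!c) it := by cases hwc with | node _ _ _ _ h => exact h it hmem
    rcases ih hr hw with ⟨rfl, hcc⟩ | h
    · -- node ls = it, !c = true, so c = false and node l is white
      cases c with
      | true => simp at hcc
      | false => exact (white_lemma d hd l hreg hwc).2 _ hmem
    · exact h ls rfl rfl

lemma countP_stem_add_node (ls : List Item) :
    ls.countP isStem + ls.countP isNode = ls.length := by
  induction ls with
  | nil => simp
  | cons a l ih => cases a <;> simp [List.countP_cons, isStem, isNode] <;> omega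

/-- Charge of a (black) node in terms of counts, given all white node children have
charge d-1. -/
lemma sum_charge_count (d : ℕ) (ls : List Item)
    (h : ∀ it ∈ ls, isNode it = true → charge false it = (d : ℤ) - 1) :
    (ls.map (charge false)).sum
      = (ls.countP isNode : ℤ) * ((d : ℤ) - 1) - ls.countP isStem := by
  induction ls with
  | nil => simp
  | cons a l ih =>
    have ih' := ih (fun x hx hn => h x (by simp [hx]) hn)
    cases a with
    | stem =>
      simp only [List.map_cons, List.sum_cons, List.countP_cons, ih']
      simp [charge, isStem, isNode]
      ring
    | node m =>
      have ha : charge false (.node m) = (d : ℤ) - 1 := h _ (by simp) (by simp [isNode])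
      simp only [List.map_cons, List.sum_cons, List.countP_cons, ih', ha]
      simp [isStem, isNode]
      ring

lemma count_solve (d : ℕ) (hd : 3 ≤ d) (m k L : ℕ) (v : ℤ)
    (he : (m : ℤ) * ((d : ℤ) - 1) - k = v) (hl : m + k = L) (hvL : v + L = d) (hv : 0 ≤ v) :
    m = 1 ∧ k + 1 + v.toNat = d := by
  have hL : (L : ℤ) = (m : ℤ) + (k : ℤ) := by exact_mod_cast hl.symm
  have hme : (m : ℤ) * d = d := by
    have h2 : (m : ℤ) * ((d : ℤ) - 1) = v + k := by linarith
    have h3 : (m : ℤ) * d = (m : ℤ) * ((d : ℤ) - 1) + m := by ring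
    rw [h3, h2]; linarith
  have hd0 : (d : ℤ) ≠ 0 := by positivity
  have hm : (m : ℤ) = 1 := mul_right_cancel₀ hd0 (by rw [one_mul]; exact hme)
  have hm' : m = 1 := by exact_mod_cast hm
  refine ⟨hm', ?_⟩
  clear he hme
  omega

end Aux


/-- Structure of rooted well-charged `d`-regular blossoming trees of total charge `0`
(root black of degree `d`, with ordered offspring list `l`): every non-root black
vertex has charge `1` and its offspring consists of exactly one white child and `d-2`
opening stems; every white vertex has charge `d-1` and its offspring consists of
`d-1` elements (each a closing stem or a black child); and the root has one white
child and `d-1` opening stems. -/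
theorem wellCharged_regular_structure (d : ℕ) (hd : 3 ≤ d) (l : List Item)
    (hrootlen : l.length = d)
    (hreg : ∀ it ∈ l, RegularFrom d it)
    (hwc : WellCharged true (.node l))
    (hch : charge true (.node l) = 0) :
    (∀ ls : List Item, Occ true (.node l) true (.node ls) → Item.node ls ≠ .node l →
      charge true (.node ls) = 1 ∧
        ls.countP isStem = d - 2 ∧ ls.countP isNode = 1) ∧
    (∀ ls : List Item, Occ true (.node l) false (.node ls) →
      charge false (.node ls) = (d : ℤ) - 1 ∧ ls.length = d - 1) ∧
    (l.countP isStem = d - 1 ∧ l.countP isNode = 1) := by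
  have hwcs : ∀ it ∈ l, WellCharged false it := by
    cases hwc with | node _ _ _ _ h => exact fun it hit => h it hit
  -- facts about a black node's children
  have black_children : ∀ ls : List Item, RegularFrom d (.node ls) →
      WellCharged true (.node ls) →
      ∀ it ∈ ls, isNode it = true → charge false it = (d : ℤ) - 1 := by
    intro ls hr hw it hit hn
    have hri : RegularFrom d it := by cases hr with | node _ _ h => exact h it hit
    have hwi : WellCharged false it := by cases hw with | node _ _ _ _ h => exact h it hit
    cases it with
    | stem => simp [isNode] at hn
    | node m => exact (white_lemma d hd m hri hwi).1
  have root_children : ∀ it ∈ l, isNode it = true → charge false it = (d : ℤ) - 1 := by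
    intro it hit hn
    cases it with
    | stem => simp [isNode] at hn
    | node m => exact (white_lemma d hd m (hreg _ hit) (hwcs _ hit)).1
  refine ⟨?_, ?_, ?_⟩
  · -- non-root black vertices
    intro ls hocc hne
    cases hocc with
    | refl => exact absurd rfl hne
    | child _ _ _ _ it hmem hocc' =>
      simp only [Bool.not_true] at hocc'
      have hch1 : charge true (.node ls) = 1 := by
        rcases occ_black hd hocc' (hreg _ hmem) (hwcs _ hmem) with ⟨_, hcc⟩ | h
        · simp at hcc
        · exact h ls rfl rfl
      obtain ⟨hr, hw⟩ := occ_prop hocc' (hreg _ hmem) (hwcs _ hmem)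
      have hlen : ls.length = d - 1 := by cases hr with | node _ h _ => exact h
      have hsum := sum_charge_count d ls (black_children ls hr hw)
      have hse : charge true (.node ls) = (ls.map (charge false)).sum :=
        charge_node_eq_sum true ls
      have he : (ls.countP isNode : ℤ) * ((d : ℤ) - 1) - ls.countP isStem = 1 := by
        rw [← hsum, ← hse, hch1]
      have hmk := countP_stem_add_node ls
      obtain ⟨hm, hk⟩ := count_solve d hd (ls.countP isNode) (ls.countP isStem) (d - 1) 1
        he (by omega) (by omega) (by omega)
      exact ⟨hch1, by omega, hm⟩
  · -- white vertices
    intro ls hocc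
    cases hocc with
    | child _ _ _ _ it hmem hocc' =>
      simp only [Bool.not_true] at hocc'
      obtain ⟨hr, hw⟩ := occ_prop hocc' (hreg _ hmem) (hwcs _ hmem)
      have hlen : ls.length = d - 1 := by cases hr with | node _ h _ => exact h
      exact ⟨(white_lemma d hd ls hr hw).1, hlen⟩
  · -- the root
    have hsum := sum_charge_count d l root_children
    have hse : charge true (.node l) = (l.map (charge false)).sum :=
      charge_node_eq_sum true l
    have he : (l.countP isNode : ℤ) * ((d : ℤ) - 1) - l.countP isStem = 0 := by
      rw [← hsum, ← hse, hch]
    have hmk := countP_stem_add_node l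
    obtain ⟨hm, hk⟩ := count_solve d hd (l.countP isNode) (l.countP isStem) d 0
      he (by omega) (by omega) (by omega)
    exact ⟨by omega, hm⟩
end
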